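/- Heap monotonicity: for any command C, exit condition ε ∈ {ok, er}, and states, if ((s,h), (s',h')) is in the denotational semantics ⟦C⟧_ε, then dom(h) ⊆ dom(h'). -/
import Mathlib


/-- Variables -/
abbrev Var := String
/-- Locations -/
abbrev Loc := ℕ
/-- Values -/
abbrev Val := ℕ

/-- Terms: variables, the constant null, and numeric constants. -/
inductive Term where
  | var (x : Var)
  | null
  | const (n : ℕ)
deriving DecidableEq

/-- Stores: total functions from variables to values. -/
abbrev Store := Var → Val

/-- Heaps: partial functions from locations to values or ⊥.
`none` = not in domain, `some none` = ⊥ (deallocated), `some (some v)` = value `v`. -/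
abbrev Heap := Loc → Option (Option Val)

def Term.eval (s : Store) : Term → Val
  | .var x => s x
  | .null => 0
  | .const n => n

def Store.upd (s : Store) (x : Var) (v : Val) : Store :=
  fun y => if y = x then v else s y

def Heap.emptyH : Heap := fun _ => none

def Heap.dom (h : Heap) : Set Loc := {l | h l ≠ none}

def Heap.domPos (h : Heap) : Set Loc := {l | ∃ v : Val, h l = some (some v)}

def Heap.disj (h₁ h₂ : Heap) : Prop := Heap.dom h₁ ∩ Heap.dom h₂ = ∅

def Heap.comp (h₁ h₂ : Heap) : Heap :=
  fun l => match h₁ l with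
    | some v => some v
    | none => h₂ l

def Heap.upd (h : Heap) (l : Loc) (v : Option Val) : Heap :=
  fun l' => if l' = l then some v else h l'

def Heap.single (l : Loc) (v : Option Val) : Heap :=
  fun l' => if l' = l then some v else none

/-- Atomic formulas of quantifier-free symbolic heaps. -/
inductive Atom where
  | emp
  | pt (t u : Term)      -- t ↦ u
  | npt (t : Term)       -- t ↛  (negative heap assertion)
  | eq (t u : Term)      -- t ≈ u
  | neq (t u : Term)     -- t ≉ u
deriving DecidableEq

/-- Quantifier-free symbolic heap: a ∗-conjunction of atoms. -/
abbrev SymHeap := List Atom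

def Atom.sat (s : Store) (h : Heap) : Atom → Prop
  | .emp => h = Heap.emptyH
  | .pt t u => h = Heap.single (t.eval s) (some (u.eval s))
  | .npt t => h = Heap.single (t.eval s) none
  | .eq t u => t.eval s = u.eval s ∧ h = Heap.emptyH
  | .neq t u => t.eval s ≠ u.eval s ∧ h = Heap.emptyH

def SymHeap.sat (s : Store) (h : Heap) : SymHeap → Prop
  | [] => h = Heap.emptyH
  | a :: ψ => ∃ h₁ h₂, Heap.disj h₁ h₂ ∧ h = Heap.comp h₁ h₂ ∧
      Atom.sat s h₁ a ∧ SymHeap.sat s h₂ ψ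

def Term.subst (t : Term) (x : Var) (r : Term) : Term :=
  match t with
  | .var y => if y = x then r else .var y
  | t => t

def Atom.subst (a : Atom) (x : Var) (r : Term) : Atom :=
  match a with
  | .emp => .emp
  | .pt t u => .pt (t.subst x r) (u.subst x r)
  | .npt t => .npt (t.subst x r)
  | .eq t u => .eq (t.subst x r) (u.subst x r)
  | .neq t u => .neq (t.subst x r) (u.subst x r)

def SymHeap.subst (ψ : SymHeap) (x : Var) (r : Term) : SymHeap :=
  ψ.map (Atom.subst · x r)

def Term.fv : Term → Set Var
  | .var x => {x}
  | _ => ∅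

def Atom.fv : Atom → Set Var
  | .emp => ∅
  | .pt t u => t.fv ∪ u.fv
  | .npt t => t.fv
  | .eq t u => t.fv ∪ u.fv
  | .neq t u => t.fv ∪ u.fv

def SymHeap.fv (ψ : SymHeap) : Set Var := ⋃ a ∈ ψ, Atom.fv a

/-- Commands of the ISL programming language. -/
inductive Com where
  | skip
  | assign (x : Var) (t : Term)       -- x := t
  | havoc (x : Var)                   -- x := *
  | assm (B : SymHeap)                -- assume(B), B a pure formula
  | localv (x : Var) (C : Com)        -- local x in C
  | seq (C₁ C₂ : Com)
  | choice (C₁ C₂ : Com)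
  | star (C : Com)
  | alloc (x : Var)                   -- x := alloc()
  | free (x : Var)
  | load (x y : Var)                  -- x := [y]
  | store (x : Var) (t : Term)        -- [x] := t
  | error

/-- Exit conditions. -/
inductive ExitCond where
  | ok
  | er
deriving DecidableEq

abbrev State := Store × Heap
abbrev ISLRel := State → State → Prop

def relComp (R₁ R₂ : ISLRel) : ISLRel := fun a c => ∃ b, R₁ a b ∧ R₂ b c

def relIter (R : ISLRel) : ℕ → ISLRel
  | 0 => fun a b => a = b
  | n + 1 => relComp R (relIter R n)

/-- `s ⊨ B` for a pure formula `B`: satisfaction in the empty heap. -/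
def pureSat (s : Store) (B : SymHeap) : Prop := SymHeap.sat s Heap.emptyH B

/-- A pure formula: a ∗-conjunction of (in)equalities. -/
def isPure (B : SymHeap) : Prop :=
  ∀ a ∈ B, ∃ t u, a = Atom.eq t u ∨ a = Atom.neq t u

/-- Denotational semantics ⟦C⟧_ε of ISL commands. -/
def sem : Com → ExitCond → ISLRel
  | .skip, .ok => fun σ σ' => σ' = σ
  | .skip, .er => fun _ _ => False
  | .assign x t, .ok => fun σ σ' => σ' = (Store.upd σ.1 x (Term.eval σ.1 t), σ.2)
  | .assign _ _, .er => fun _ _ => False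
  | .havoc x, .ok => fun σ σ' => ∃ v : Val, σ' = (Store.upd σ.1 x v, σ.2)
  | .havoc _, .er => fun _ _ => False
  | .assm B, .ok => fun σ σ' => σ' = σ ∧ pureSat σ.1 B
  | .assm _, .er => fun _ _ => False
  | .localv x C, ε => fun σ σ' =>
      ∃ v v' : Val, sem C ε (Store.upd σ.1 x v, σ.2) (Store.upd σ'.1 x v', σ'.2) ∧
        σ.1 x = σ'.1 x
  | .seq C₁ C₂, .ok => relComp (sem C₁ .ok) (sem C₂ .ok)
  | .seq C₁ C₂, .er => fun σ σ' =>
      sem C₁ .er σ σ' ∨ relComp (sem C₁ .ok) (sem C₂ .er) σ σ'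
  | .choice C₁ C₂, ε => fun σ σ' => sem C₁ ε σ σ' ∨ sem C₂ ε σ σ'
  | .star C, .ok => fun σ σ' => ∃ n, relIter (sem C .ok) n σ σ'
  | .star C, .er => fun σ σ' => ∃ n, relComp (relIter (sem C .ok) n) (sem C .er) σ σ'
  | .alloc x, .ok => fun σ σ' =>
      ∃ (l : Loc) (v : Val), (σ.2 l = none ∨ σ.2 l = some none) ∧
        σ' = (Store.upd σ.1 x l, Heap.upd σ.2 l (some v))
  | .alloc _, .er => fun _ _ => False
  | .free x, .ok => fun σ σ' =>
      σ.1 x ∈ Heap.domPos σ.2 ∧ σ' = (σ.1, Heap.upd σ.2 (σ.1 x) none)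
  | .free x, .er => fun σ σ' => σ.1 x ∉ Heap.domPos σ.2 ∧ σ' = σ
  | .load x y, .ok => fun σ σ' =>
      ∃ v : Val, σ.2 (σ.1 y) = some (some v) ∧ σ' = (Store.upd σ.1 x v, σ.2)
  | .load _ y, .er => fun σ σ' => σ.1 y ∉ Heap.domPos σ.2 ∧ σ' = σ
  | .store x t, .ok => fun σ σ' =>
      σ.1 x ∈ Heap.domPos σ.2 ∧ σ' = (σ.1, Heap.upd σ.2 (σ.1 x) (some (Term.eval σ.1 t)))
  | .store x _, .er => fun σ σ' => σ.1 x ∉ Heap.domPos σ.2 ∧ σ' = σ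
  | .error, .ok => fun _ _ => False
  | .error, .er => fun σ σ' => σ' = σ

/-- Free variables of a command. -/
def Com.fv : Com → Set Var
  | .skip => ∅
  | .assign x t => {x} ∪ Term.fv t
  | .havoc x => {x}
  | .assm B => SymHeap.fv B
  | .localv x C => Com.fv C \ {x}
  | .seq C₁ C₂ => Com.fv C₁ ∪ Com.fv C₂
  | .choice C₁ C₂ => Com.fv C₁ ∪ Com.fv C₂
  | .star C => Com.fv C
  | .alloc x => {x}
  | .free x => {x}
  | .load x y => {x} ∪ {y}
  | .store x t => {x} ∪ Term.fv t
  | .error => ∅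

/-- Variables modified by a command. -/
def Com.mod : Com → Set Var
  | .skip => ∅
  | .assign x _ => {x}
  | .havoc x => {x}
  | .assm _ => ∅
  | .localv x C => Com.mod C \ {x}
  | .seq C₁ C₂ => Com.mod C₁ ∪ Com.mod C₂
  | .choice C₁ C₂ => Com.mod C₁ ∪ Com.mod C₂
  | .star C => Com.mod C
  | .alloc x => {x}
  | .free _ => ∅
  | .load x _ => {x}
  | .store _ _ => ∅
  | .error => ∅

/-- Semantic weakest postcondition. -/
def WPO (P : State → Prop) (C : Com) (ε : ExitCond) : Set State :=
  {σ' | ∃ σ, P σ ∧ sem C ε σ σ'}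

/-- Satisfaction of a symbolic heap as a predicate on states. -/
def satSH (ψ : SymHeap) : State → Prop := fun σ => SymHeap.sat σ.1 σ.2 ψ

/-- Satisfaction of an existentially quantified symbolic heap `∃ x⃗. ψ`. -/
def satEx (s : Store) (h : Heap) : List Var → SymHeap → Prop
  | [], ψ => SymHeap.sat s h ψ
  | x :: xs, ψ => ∃ v : Val, satEx (Store.upd s x v) h xs ψ

/-- Terms over a set of variables, together with null. -/
def termsOf (V : Set Var) : Set Term := {Term.null} ∪ (Term.var '' V)

/-- Canonical forms: symbolic heaps containing `t ≈ u` or `t ≉ u`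
for every pair of terms over `V ∪ {null}`. -/
def CFsh (V : Set Var) : Set SymHeap :=
  {ψ | ∀ t ∈ termsOf V, ∀ u ∈ termsOf V, Atom.eq t u ∈ ψ ∨ Atom.neq t u ∈ ψ}

/-- Complete case analyses `Π(V)`: pure formulas deciding every pair of terms
over `V ∪ {null}`, with the equality part reflexive and symmetric. -/
def PiCA (V : Set Var) : Set SymHeap :=
  {π | (∀ a ∈ π, ∃ t ∈ termsOf V, ∃ u ∈ termsOf V, a = Atom.eq t u ∨ a = Atom.neq t u)
    ∧ (∀ t ∈ termsOf V, ∀ u ∈ termsOf V,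
        (Atom.eq t u ∈ π ∧ Atom.neq t u ∉ π) ∨ (Atom.neq t u ∈ π ∧ Atom.eq t u ∉ π))
    ∧ (∀ t ∈ termsOf V, Atom.eq t t ∈ π)
    ∧ (∀ t u, Atom.eq t u ∈ π → Atom.eq u t ∈ π)}

def SymHeap.satisfiable (ψ : SymHeap) : Prop := ∃ s h, SymHeap.sat s h ψ

/-- Case analysis `CA(ψ, C)`. -/
def CA (ψ : SymHeap) (C : Com) : Set SymHeap :=
  {φ | ∃ π ∈ PiCA (SymHeap.fv ψ ∪ Com.fv C), φ = π ++ ψ ∧ SymHeap.satisfiable φ}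

/-- Validity of ISL triples: `⊨ [P] C [ε : Q]`. -/
def validTriple (P : State → Prop) (C : Com) (ε : ExitCond) (Q : State → Prop) : Prop :=
  ∀ σ', Q σ' → ∃ σ, P σ ∧ sem C ε σ σ'

lemma upd_dom (h : Heap) (l : Loc) (v : Option Val) :
    Heap.dom h ⊆ Heap.dom (Heap.upd h l v) := by
  intro a ha
  simp only [Heap.dom, Heap.upd, Set.mem_setOf_eq] at *
  by_cases hal : a = l <;> simp [hal, ha]

lemma heap_mono_aux (C : Com) : ∀ (ε : ExitCond) (σ σ' : State),
    sem C ε σ σ' → Heap.dom σ.2 ⊆ Heap.dom σ'.2 := by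
  induction C with
  | skip => rintro (_|_) σ σ' hs <;> simp [sem] at hs; subst hs; rfl
  | assign x t => rintro (_|_) σ σ' hs <;> simp [sem] at hs; subst hs; rfl
  | havoc x =>
      rintro (_|_) σ σ' hs <;> simp [sem] at hs
      obtain ⟨v, hv⟩ := hs; subst hv; rfl
  | assm B => rintro (_|_) σ σ' hs <;> simp [sem] at hs; rw [hs.1]
  | localv x C ih =>
      rintro ε σ σ' hs
      obtain ⟨v, v', hsem, _⟩ := hs
      exact ih ε (σ.1.upd x v, σ.2) (σ'.1.upd x v', σ'.2) hsem
  | seq C₁ C₂ ih₁ ih₂ =>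
      rintro (_|_) σ σ' hs
      · obtain ⟨b, h1, h2⟩ := hs
        exact (ih₁ .ok _ _ h1).trans (ih₂ .ok _ _ h2)
      · rcases hs with h1 | ⟨b, h1, h2⟩
        · exact ih₁ .er _ _ h1
        · exact (ih₁ .ok _ _ h1).trans (ih₂ .er _ _ h2)
  | choice C₁ C₂ ih₁ ih₂ =>
      rintro ε σ σ' (hs | hs)
      · exact ih₁ ε _ _ hs
      · exact ih₂ ε _ _ hs
  | star C ih =>
      have iter : ∀ n σ σ', relIter (sem C .ok) n σ σ' →
          Heap.dom σ.2 ⊆ Heap.dom σ'.2 := by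
        intro n
        induction n with
        | zero => intro σ σ' hs; cases hs; rfl
        | succ n ihn =>
            rintro σ σ' ⟨b, h1, h2⟩
            exact (ih .ok _ _ h1).trans (ihn _ _ h2)
      rintro (_|_) σ σ' hs
      · obtain ⟨n, hn⟩ := hs; exact iter n _ _ hn
      · obtain ⟨n, b, h1, h2⟩ := hs
        exact (iter n _ _ h1).trans (ih .er _ _ h2)
  | alloc x =>
      rintro (_|_) σ σ' hs <;> simp [sem] at hs
      obtain ⟨l, v, _, heq⟩ := hs
      rw [heq]; exact upd_dom _ _ _
  | free x =>
      rintro (_|_) σ σ' ⟨_, heq⟩ <;> rw [heq]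
      exact upd_dom _ _ _
  | load x y =>
      rintro (_|_) σ σ' hs
      · obtain ⟨v, _, heq⟩ := hs; rw [heq]
      · rw [hs.2]
  | store x t =>
      rintro (_|_) σ σ' ⟨_, heq⟩ <;> rw [heq]
      exact upd_dom _ _ _
  | error => rintro (_|_) σ σ' hs <;> simp [sem] at hs; subst hs; rfl

/-- heap monotonicity. -/
theorem heap_monotonicity (C : Com) (ε : ExitCond) (s s' : Store) (h h' : Heap)
    (hsem : sem C ε (s, h) (s', h')) :
    Heap.dom h ⊆ Heap.dom h' := by
  exact heap_mono_aux C ε (s, h) (s', h') hsem
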